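/- arXiv:2505.21475 — 4 statements merged into one kernel-verified Lean document; each statement's English description precedes it below -/
import Mathlib

section
/- Let W, V_t, V_{t+1} be subspaces of ℝ^d with V_t ⊆ V_{t+1}, let w^{(1)},…,w^{(K)} be an orthonormal basis of W, and define the potential Φ_t = Σ_{i=1}^K ‖Π_{V_t^⊥} w^{(i)}‖². If there exist a unit vector v ∈ V_{t+1} and a unit vector w ∈ W such that w · (Π_{V_t^⊥} v) ≥ β ≥ 0, then Φ_{t+1} ≤ Φ_t − β². -/
open MeasureTheory

section aux

variable {E : Type*} [NormedAddCommGroup E] [InnerProductSpace ℝ E] [FiniteDimensional ℝ E]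

lemma norm_proj_le (K : Submodule ℝ E) (x : E) :
    ‖(Submodule.orthogonalProjectionOnto K x : E)‖ ≤ ‖x‖ := by
  simpa using (Submodule.orthogonalProjectionOnto K).le_of_opNorm_le (Submodule.orthogonalProjectionOnto_norm_le K) x

end aux

/-- **Potential decrease.** Let `W, Vₜ ⊆ Vₜ₊₁` be subspaces of `ℝ^d`, let
`w¹,…,w^K` be an orthonormal basis of `W`, and set `Φₜ = Σᵢ ‖Π_{Vₜ^⊥} wⁱ‖²`. If there are unit
vectors `v ∈ Vₜ₊₁` and `w₀ ∈ W` with `⟨w₀, Π_{Vₜ^⊥} v⟩ ≥ β ≥ 0`, then `Φₜ₊₁ ≤ Φₜ − β²`. -/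
theorem stmt_6 (d K : ℕ) (W Vt Vt1 : Submodule ℝ (EuclideanSpace ℝ (Fin d)))
    (hVV : Vt ≤ Vt1)
    (w : Fin K → EuclideanSpace ℝ (Fin d)) (hw : Orthonormal ℝ w)
    (hwW : ∀ i, w i ∈ W) (hspan : Submodule.span ℝ (Set.range w) = W)
    (v w0 : EuclideanSpace ℝ (Fin d)) (hv : v ∈ Vt1) (hvnorm : ‖v‖ = 1)
    (hw0 : w0 ∈ W) (hw0norm : ‖w0‖ = 1) (β : ℝ) (hβ : 0 ≤ β)
    (hcorr : β ≤ (inner ℝ w0 ((Submodule.orthogonalProjectionOnto Vtᗮ v : EuclideanSpace ℝ (Fin d))) : ℝ)) :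
    ∑ i, ‖(Submodule.orthogonalProjectionOnto Vt1ᗮ (w i) : EuclideanSpace ℝ (Fin d))‖ ^ 2 ≤
      (∑ i, ‖(Submodule.orthogonalProjectionOnto Vtᗮ (w i) : EuclideanSpace ℝ (Fin d))‖ ^ 2) - β ^ 2 := by
  have hle : Vt1ᗮ ≤ Vtᗮ := Submodule.orthogonal_le hVV
  set p : EuclideanSpace ℝ (Fin d) := (Submodule.orthogonalProjectionOnto Vtᗮ v : EuclideanSpace ℝ (Fin d))
    with hp
  -- Q ∘ P = Q
  have hQP : ∀ x : EuclideanSpace ℝ (Fin d),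
      ((Submodule.orthogonalProjectionOnto Vt1ᗮ
        ((Submodule.orthogonalProjectionOnto Vtᗮ x : EuclideanSpace ℝ (Fin d)))) : EuclideanSpace ℝ (Fin d))
      = (Submodule.orthogonalProjectionOnto Vt1ᗮ x : EuclideanSpace ℝ (Fin d)) := fun x => by
    rw [← Submodule.starProjection_apply Vtᗮ x, Submodule.orthogonalProjectionOnto_starProjection_of_le hle]
  -- p ∈ Vt1ᗮᗮ
  have hpVt : p ∈ Vtᗮ := (Submodule.orthogonalProjectionOnto Vtᗮ v).2
  have hQv : (Submodule.orthogonalProjectionOnto Vt1ᗮ v : EuclideanSpace ℝ (Fin d)) = 0 := by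
    rw [Submodule.orthogonalProjectionOnto_apply_of_mem_orthogonal (Submodule.le_orthogonal_orthogonal _ hv)]
    rfl
  have hQp : (Submodule.orthogonalProjectionOnto Vt1ᗮ p : EuclideanSpace ℝ (Fin d)) = 0 := by
    rw [hp, hQP, hQv]
  have hpVt1 : p ∈ Vt1ᗮᗮ := by
    have h := Submodule.sub_starProjection_mem_orthogonal (K := Vt1ᗮ) p
    rwa [Submodule.starProjection_apply, hQp, sub_zero] at h
  -- per-term inequality with a vector u ∈ Vtᗮ ∩ Vt1ᗮᗮ, ‖u‖ ≤ 1
  have key : ∀ (u : EuclideanSpace ℝ (Fin d)), u ∈ Vtᗮ → u ∈ Vt1ᗮᗮ → ‖u‖ ≤ 1 →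
      ∀ x : EuclideanSpace ℝ (Fin d),
      ‖(Submodule.orthogonalProjectionOnto Vt1ᗮ x : EuclideanSpace ℝ (Fin d))‖ ^ 2 + (inner ℝ u x : ℝ) ^ 2 ≤
        ‖(Submodule.orthogonalProjectionOnto Vtᗮ x : EuclideanSpace ℝ (Fin d))‖ ^ 2 := by
    intro u huVt huVt1 hun x
    set Px : EuclideanSpace ℝ (Fin d) := (Submodule.orthogonalProjectionOnto Vtᗮ x : EuclideanSpace ℝ (Fin d))
    set Qx : EuclideanSpace ℝ (Fin d) := (Submodule.orthogonalProjectionOnto Vt1ᗮ x : EuclideanSpace ℝ (Fin d))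
    have hQx : Qx ∈ Vt1ᗮ := (Submodule.orthogonalProjectionOnto Vt1ᗮ x).2
    have hsub : Px - Qx ∈ Vt1ᗮᗮ := by
      have h := Submodule.sub_starProjection_mem_orthogonal (K := Vt1ᗮ) Px
      rwa [Submodule.starProjection_apply, hQP x] at h
    have hinner0 : (inner ℝ Qx (Px - Qx) : ℝ) = 0 :=
      Submodule.inner_right_of_mem_orthogonal hQx hsub
    have hPyth : ‖Px‖ ^ 2 = ‖Qx‖ ^ 2 + ‖Px - Qx‖ ^ 2 := by
      have h := norm_add_sq_real Qx (Px - Qx)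
      rw [add_sub_cancel] at h
      rw [h, hinner0]; ring
    have hux : (inner ℝ u x : ℝ) = inner ℝ u (Px - Qx) := by
      have h1 : (inner ℝ u (x - Px) : ℝ) = 0 :=
        Submodule.inner_right_of_mem_orthogonal huVt
          (Submodule.sub_starProjection_mem_orthogonal (K := Vtᗮ) x)
      have h2 : (inner ℝ u Qx : ℝ) = 0 :=
        Submodule.inner_left_of_mem_orthogonal hQx huVt1
      rw [inner_sub_right] at h1
      rw [inner_sub_right, h2, sub_zero]
      linarith
    have hcs : (inner ℝ u (Px - Qx) : ℝ) ^ 2 ≤ ‖Px - Qx‖ ^ 2 := by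
      have h2 : |(inner ℝ u (Px - Qx) : ℝ)| ≤ ‖Px - Qx‖ := by
        calc |(inner ℝ u (Px - Qx) : ℝ)| ≤ ‖u‖ * ‖Px - Qx‖ := abs_real_inner_le_norm _ _
        _ ≤ 1 * ‖Px - Qx‖ := mul_le_mul_of_nonneg_right hun (norm_nonneg _)
        _ = ‖Px - Qx‖ := one_mul _
      calc (inner ℝ u (Px - Qx) : ℝ) ^ 2 = |(inner ℝ u (Px - Qx) : ℝ)| ^ 2 := (sq_abs _).symm
      _ ≤ ‖Px - Qx‖ ^ 2 := pow_le_pow_left₀ (abs_nonneg _) h2 2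
    rw [hux, hPyth]
    linarith
  rcases eq_or_ne p 0 with hp0 | hp0
  · -- then β = 0
    have hβ0 : β = 0 := by
      have h : β ≤ (0 : ℝ) := by
        rw [hp0] at hcorr
        simpa using hcorr
      linarith
    rw [hβ0]
    have h0 : (0 : ℝ) ^ 2 = 0 := by norm_num
    rw [h0, sub_zero]
    apply Finset.sum_le_sum
    intro i _
    have h := key 0 (Submodule.zero_mem _) (Submodule.zero_mem _) (by simp) (w i)
    simpa only [inner_zero_left, ne_eq, OfNat.ofNat_ne_zero, not_false_eq_true, zero_pow,
      add_zero] using h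
  · set u : EuclideanSpace ℝ (Fin d) := ‖p‖⁻¹ • p with hu
    have hpn : 0 < ‖p‖ := norm_pos_iff.mpr hp0
    have hp1 : ‖p‖ ≤ 1 := by
      have h := norm_proj_le Vtᗮ v
      rw [hvnorm] at h
      exact h
    have hun : ‖u‖ = 1 := norm_smul_inv_norm hp0
    have huVt : u ∈ Vtᗮ := Submodule.smul_mem _ _ hpVt
    have huVt1 : u ∈ Vt1ᗮᗮ := Submodule.smul_mem _ _ hpVt1
    -- β ≤ ⟨u, w0⟩
    have hbu : β ≤ (inner ℝ u w0 : ℝ) := by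
      rw [hu, real_inner_smul_left, real_inner_comm]
      have h4 : (1 : ℝ) ≤ ‖p‖⁻¹ := by
        rw [le_inv_comm₀ one_pos hpn]
        simpa using hp1
      nlinarith [mul_nonneg (sub_nonneg.mpr h4) (le_trans hβ hcorr)]
    -- ⟨u, w0⟩² ≤ ∑ ⟨u, w i⟩²
    obtain ⟨a, ha⟩ : ∃ a : Fin K → ℝ, ∑ i, a i • w i = w0 := by
      rw [← Submodule.mem_span_range_iff_exists_fun, hspan]
      exact hw0
    have hnorm1 : ∑ i, a i ^ 2 = 1 := by
      have h := hw.inner_sum a a Finset.univ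
      rw [ha] at h
      have h2 : (inner ℝ w0 w0 : ℝ) = 1 := by
        rw [real_inner_self_eq_norm_sq, hw0norm]; norm_num
      rw [h2] at h
      simp only [starRingEnd_apply, star_trivial] at h
      rw [h]
      exact Finset.sum_congr rfl fun i _ => by ring
    have hexp : (inner ℝ u w0 : ℝ) = ∑ i, a i * inner ℝ u (w i) := by
      rw [← ha, inner_sum]
      exact Finset.sum_congr rfl fun i _ => real_inner_smul_right _ _ _
    have hcs2 : (inner ℝ u w0 : ℝ) ^ 2 ≤ ∑ i, (inner ℝ u (w i) : ℝ) ^ 2 := by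
      rw [hexp]
      calc (∑ i, a i * (inner ℝ u (w i) : ℝ)) ^ 2
          ≤ (∑ i, a i ^ 2) * (∑ i, (inner ℝ u (w i) : ℝ) ^ 2) :=
            Finset.sum_mul_sq_le_sq_mul_sq _ _ _
        _ = ∑ i, (inner ℝ u (w i) : ℝ) ^ 2 := by rw [hnorm1, one_mul]
    have hβ2 : β ^ 2 ≤ ∑ i, (inner ℝ u (w i) : ℝ) ^ 2 := by
      calc β ^ 2 ≤ (inner ℝ u w0 : ℝ) ^ 2 := pow_le_pow_left₀ hβ hbu 2
        _ ≤ _ := hcs2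
    have hsum : ∑ i, (‖(Submodule.orthogonalProjectionOnto Vt1ᗮ (w i) : EuclideanSpace ℝ (Fin d))‖ ^ 2
          + (inner ℝ u (w i) : ℝ) ^ 2)
        ≤ ∑ i, ‖(Submodule.orthogonalProjectionOnto Vtᗮ (w i) : EuclideanSpace ℝ (Fin d))‖ ^ 2 :=
      Finset.sum_le_sum fun i _ => key u huVt huVt1 (le_of_eq hun) (w i)
    rw [Finset.sum_add_distrib] at hsum
    linarith
end

section
/- Let D be a joint distribution of (x, y) on X × ℝ such that for every measurable f : X → ℝ, E[(y − f(x))²] ≥ τ, and E[y²·1(|y| > B)] ≤ δ. Then for every measurable g : X → ℝ, E[(y − g(x))² · 1(y ∈ [−B, B])] ≥ τ − 7δ. -/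
open MeasureTheory

/-- If every measurable predictor has squared error at least `τ` and the
extreme labels contribute at most `δ` to the second moment, then every measurable `g` has
squared error at least `τ − 7δ` restricted to the labels in `[−B, B]`. -/
theorem stmt_7 {X : Type*} [MeasurableSpace X] (D : Measure (X × ℝ)) [IsProbabilityMeasure D]
    (τ δ B : ℝ) (hτ : 0 < τ) (hδ : 0 < δ) (hB : 0 < B)
    (hvar : ∀ f : X → ℝ, Measurable f → τ ≤ ∫ p, (p.2 - f p.1) ^ 2 ∂D)
    (htail : ∫ p : X × ℝ, (if B < |p.2| then p.2 ^ 2 else 0) ∂D ≤ δ) :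
    ∀ g : X → ℝ, Measurable g →
      τ - 7 * δ ≤ ∫ p : X × ℝ, (if |p.2| ≤ B then (p.2 - g p.1) ^ 2 else 0) ∂D := by
  intro g hg
  -- clamped predictor
  set f : X → ℝ := fun x => max (-B) (min B (g x)) with hf_def
  have hf : Measurable f := measurable_const.max (measurable_const.min hg)
  have hfB : ∀ x, |f x| ≤ B := by
    intro x
    rw [abs_le]
    constructor
    · exact le_max_left _ _
    · exact max_le (by linarith) (min_le_left _ _)
  -- measurability of the various integrands
  have hmg : Measurable (fun p : X × ℝ => (p.2 - g p.1) ^ 2) :=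
    (measurable_snd.sub (hg.comp measurable_fst)).pow_const 2
  have hmf : Measurable (fun p : X × ℝ => (p.2 - f p.1) ^ 2) :=
    (measurable_snd.sub (hf.comp measurable_fst)).pow_const 2
  have hm0 : Measurable (fun p : X × ℝ => (p.2 : ℝ) ^ 2) := measurable_snd.pow_const 2
  have hsetle : MeasurableSet {p : X × ℝ | |p.2| ≤ B} :=
    measurableSet_le measurable_snd.abs measurable_const
  have hsetlt : MeasurableSet {p : X × ℝ | B < |p.2|} :=
    measurableSet_lt measurable_const measurable_snd.abs
  have hmu : Measurable (fun p : X × ℝ => if |p.2| ≤ B then (p.2 - g p.1) ^ 2 else 0) :=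
    Measurable.ite hsetle hmg measurable_const
  have hmt : Measurable (fun p : X × ℝ => if B < |p.2| then p.2 ^ 2 else 0) :=
    Measurable.ite hsetlt hm0 measurable_const
  -- integrability forced by hvar
  have hIg : Integrable (fun p : X × ℝ => (p.2 - g p.1) ^ 2) D := by
    by_contra h
    have := hvar g hg
    rw [integral_undef h] at this
    linarith
  have hIf : Integrable (fun p : X × ℝ => (p.2 - f p.1) ^ 2) D := by
    by_contra h
    have := hvar f hf
    rw [integral_undef h] at this
    linarith
  have hI0 : Integrable (fun p : X × ℝ => (p.2 : ℝ) ^ 2) D := by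
    by_contra h
    have := hvar (fun _ => 0) measurable_const
    simp only [sub_zero] at this
    rw [integral_undef h] at this
    linarith
  -- integrability of the truncated integrands by domination
  have hIu : Integrable (fun p : X × ℝ => if |p.2| ≤ B then (p.2 - g p.1) ^ 2 else 0) D := by
    refine hIg.mono' hmu.aestronglyMeasurable (Filter.Eventually.of_forall fun p => ?_)
    by_cases h : |p.2| ≤ B
    · rw [if_pos h, Real.norm_eq_abs, abs_of_nonneg (sq_nonneg _)]
    · rw [if_neg h, norm_zero]; exact sq_nonneg _
  have hIt : Integrable (fun p : X × ℝ => if B < |p.2| then p.2 ^ 2 else 0) D := by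
    refine hI0.mono' hmt.aestronglyMeasurable (Filter.Eventually.of_forall fun p => ?_)
    by_cases h : B < |p.2|
    · rw [if_pos h, Real.norm_eq_abs, abs_of_nonneg (sq_nonneg _)]
    · rw [if_neg h, norm_zero]; exact sq_nonneg _
  -- pointwise bound: (y - f x)^2 ≤ u + 4 t
  have hpt : ∀ p : X × ℝ, (p.2 - f p.1) ^ 2 ≤
      (if |p.2| ≤ B then (p.2 - g p.1) ^ 2 else 0) +
        4 * (if B < |p.2| then p.2 ^ 2 else 0) := by
    intro p
    by_cases h : |p.2| ≤ B
    · simp only [h, if_pos, if_neg (not_lt.mpr h), mul_zero, add_zero]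
      have hy := abs_le.mp h
      rcases le_total (g p.1) (-B) with hc | hc
      · have : f p.1 = -B := by
          simp [hf_def, max_eq_left, min_eq_right (by linarith : g p.1 ≤ B), hc]
        rw [this]; nlinarith
      · rcases le_total B (g p.1) with hc2 | hc2
        · have : f p.1 = B := by
            simp [hf_def, min_eq_left hc2, max_eq_right (by linarith : -B ≤ B)]
          rw [this]; nlinarith
        · have : f p.1 = g p.1 := by
            simp [hf_def, min_eq_right hc2, max_eq_right hc]
          rw [this]
    · push_neg at h
      simp only [if_neg (not_le.mpr h), if_pos h, zero_add]
      have h1 := hfB p.1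
      have h2 := abs_le.mp h1
      rcases abs_lt.mp (lt_of_le_of_lt h1 h) with ⟨h3, h4⟩
      rcases le_or_gt 0 p.2 with hy | hy
      · rw [abs_of_nonneg hy] at h
        nlinarith [mul_pos (show (0:ℝ) < p.2 + f p.1 by linarith [h2.1])
          (show (0:ℝ) < 3 * p.2 - f p.1 by linarith [h2.2])]
      · rw [abs_of_neg hy] at h
        nlinarith [mul_pos_of_neg_of_neg (show p.2 + f p.1 < 0 by linarith [h2.2])
          (show 3 * p.2 - f p.1 < 0 by linarith [h2.1])]
  -- combine
  have key : τ ≤ (∫ p : X × ℝ, (if |p.2| ≤ B then (p.2 - g p.1) ^ 2 else 0) ∂D) +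
      4 * ∫ p : X × ℝ, (if B < |p.2| then p.2 ^ 2 else 0) ∂D := by
    have := integral_mono hIf (hIu.add (hIt.const_mul 4)) hpt
    calc τ ≤ ∫ p, (p.2 - f p.1) ^ 2 ∂D := hvar f hf
      _ ≤ ∫ p : X × ℝ, ((if |p.2| ≤ B then (p.2 - g p.1) ^ 2 else 0) +
            4 * (if B < |p.2| then p.2 ^ 2 else 0)) ∂D := this
      _ = _ := by rw [integral_add hIu (hIt.const_mul 4), integral_const_mul]
  linarith
end

section
/- Let D be a distribution of y on ℝ with Var(D) ≥ τ and E_{y∼D}[1(y ∉ [−B,B])·y²] ≤ δ. Then Pr_{y∼D}[y ∈ [−B,B]] · Var(D | y ∈ [−B,B]) ≥ τ − 7δ. -/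
open MeasureTheory ProbabilityTheory

set_option maxHeartbeats 1000000 in
/-- If a real distribution `D` has variance at least `τ` and the labels
outside `[−B,B]` contribute at most `δ` to the second moment, then
`Pr[y ∈ [−B,B]] · Var(D | y ∈ [−B,B]) ≥ τ − 7δ`. -/
theorem stmt_8 (D : Measure ℝ) [IsProbabilityMeasure D] (τ δ B : ℝ)
    (hτ : 0 < τ) (hδ : 0 < δ) (hB : 0 < B)
    (hvar : τ ≤ variance id D)
    (htail : ∫ y : ℝ, (if B < |y| then y ^ 2 else 0) ∂D ≤ δ)
    (hpos : 0 < D {y : ℝ | |y| ≤ B}) :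
    τ - 7 * δ ≤ (D {y : ℝ | |y| ≤ B}).toReal * variance id (D[|{y : ℝ | |y| ≤ B}]) := by
  set S : Set ℝ := {y : ℝ | |y| ≤ B} with hSdef
  have hSm : MeasurableSet S := by
    have hSeq : S = Set.Icc (-B) B := by ext y; simp [hSdef, abs_le]
    rw [hSeq]; exact measurableSet_Icc
  -- Memℒp of id
  have hmem : MemLp (id : ℝ → ℝ) 2 D := by
    by_contra h
    have htop := evariance_eq_top aestronglyMeasurable_id h
    rw [variance, htop] at hvar
    simp at hvar; linarith
  have hint1 : Integrable (fun x : ℝ => x) D := hmem.integrable one_le_two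
  have hint2 : Integrable (fun x : ℝ => x ^ 2) D := hmem.integrable_sq
  -- basic measure quantities
  set p : ℝ := (D S).toReal with hpdef
  set q : ℝ := (D Sᶜ).toReal with hqdef
  have hp : 0 < p := ENNReal.toReal_pos hpos.ne' (measure_ne_top D S)
  have hpq : p + q = 1 := by
    rw [hpdef, hqdef, ← ENNReal.toReal_add (measure_ne_top D S) (measure_ne_top D Sᶜ),
      measure_add_measure_compl hSm, measure_univ, ENNReal.toReal_one]
  have hq0 : 0 ≤ q := ENNReal.toReal_nonneg
  have hp1 : p ≤ 1 := by linarith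
  -- the conditional measure
  have hνprob : IsProbabilityMeasure (D[|S]) := cond_isProbabilityMeasure hpos.ne'
  have hνae : ∀ᵐ x ∂(D[|S]), x ∈ S := by
    rw [ProbabilityTheory.cond]
    exact Measure.ae_smul_measure (ae_restrict_mem hSm) _
  have hmemν : MemLp (id : ℝ → ℝ) 2 (D[|S]) := by
    refine MemLp.of_bound aestronglyMeasurable_id B ?_
    filter_upwards [hνae] with x hx
    simpa [hSdef] using hx
  -- integral over the conditional measure
  have hνint : ∀ f : ℝ → ℝ, ∫ x, f x ∂(D[|S]) = p⁻¹ * ∫ x in S, f x ∂D := by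
    intro f
    rw [ProbabilityTheory.cond, integral_smul_measure, ENNReal.toReal_inv, hpdef,
      smul_eq_mul]
  set I1 : ℝ := ∫ x in S, x ∂D with hI1def
  set I2 : ℝ := ∫ x in S, x ^ 2 ∂D with hI2def
  set J1 : ℝ := ∫ x in Sᶜ, x ∂D with hJ1def
  set T : ℝ := ∫ x in Sᶜ, x ^ 2 ∂D with hTdef
  -- tail bound
  have hST : ∀ y : ℝ, (if B < |y| then y ^ 2 else 0) = Sᶜ.indicator (fun y => y ^ 2) y := by
    intro y
    simp only [Set.indicator_apply, Set.mem_compl_iff, hSdef, Set.mem_setOf_eq, not_le]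
  have hTδ : T ≤ δ := by
    have : ∫ y : ℝ, (if B < |y| then y ^ 2 else 0) ∂D = T := by
      rw [hTdef, ← integral_indicator hSm.compl]
      exact integral_congr_ae (Filter.Eventually.of_forall hST)
    linarith [htail, this]
  have hT0 : 0 ≤ T := setIntegral_nonneg hSm.compl fun x _ => sq_nonneg x
  -- B² q ≤ T
  have hq_le : B ^ 2 * q ≤ T := by
    have h1 : ∫ x in Sᶜ, B ^ 2 ∂D ≤ T := by
      refine setIntegral_mono_on (integrableOn_const (measure_ne_top D Sᶜ))
        hint2.integrableOn hSm.compl fun x hx => ?_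
      have hx' : B < |x| := by simpa [hSdef, not_le] using hx
      nlinarith [sq_abs x, abs_nonneg x]
    rwa [setIntegral_const, smul_eq_mul, mul_comm] at h1
  -- |J1| ≤ T / B
  have hJ : |J1| ≤ T / B := by
    have h1 : |J1| ≤ ∫ x in Sᶜ, |x| ∂D := by
      simpa using norm_integral_le_integral_norm (μ := D.restrict Sᶜ) (fun x : ℝ => x)
    have h2 : ∫ x in Sᶜ, |x| ∂D ≤ ∫ x in Sᶜ, x ^ 2 / B ∂D := by
      refine setIntegral_mono_on hint1.abs.integrableOn (hint2.div_const B).integrableOn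
        hSm.compl fun x hx => ?_
      have hx' : B < |x| := by simpa [hSdef, not_le] using hx
      rw [le_div_iff₀ hB]
      nlinarith [sq_abs x, abs_nonneg x]
    have h3 : ∫ x in Sᶜ, x ^ 2 / B ∂D = T / B := by
      rw [hTdef, integral_div]
    linarith
  -- |I1| ≤ B * p
  have hI1b : |I1| ≤ B * p := by
    have h1 : |I1| ≤ ∫ x in S, |x| ∂D := by
      simpa using norm_integral_le_integral_norm (μ := D.restrict S) (fun x : ℝ => x)
    have h2 : ∫ x in S, |x| ∂D ≤ ∫ x in S, B ∂D := by
      refine setIntegral_mono_on hint1.abs.integrableOn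
        (integrableOn_const (measure_ne_top D S)) hSm fun x hx => ?_
      simpa [hSdef] using hx
    have h3 : ∫ x in S, B ∂D = p * B := by rw [setIntegral_const, smul_eq_mul, hpdef]; rfl
    nlinarith
  -- moment decompositions
  have hM2 : ∫ x, x ^ 2 ∂D = I2 + T := (integral_add_compl hSm hint2).symm
  have hM1 : ∫ x, x ∂D = I1 + J1 := (integral_add_compl hSm hint1).symm
  -- variance lower bound
  have hvar' : τ ≤ I2 + T - (I1 + J1) ^ 2 := by
    rw [variance_eq_sub hmem] at hvar
    have e2 : D[(id : ℝ → ℝ) ^ 2] = I2 + T := by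
      rw [← hM2]; apply integral_congr_ae; filter_upwards with x; simp
    have e1 : D[(id : ℝ → ℝ)] = I1 + J1 := by rw [← hM1]; rfl
    rw [e2, e1] at hvar
    linarith
  -- compute the target quantity
  have hval : p * variance id (D[|S]) = I2 - I1 ^ 2 / p := by
    rw [variance_eq_sub hmemν]
    have e2 : (D[|S])[(id : ℝ → ℝ) ^ 2] = p⁻¹ * I2 := by
      have : (D[|S])[(id : ℝ → ℝ) ^ 2] = ∫ x, x ^ 2 ∂(D[|S]) := by
        apply integral_congr_ae; filter_upwards with x; simp
      rw [this, hνint fun x => x ^ 2]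
    have e1 : (D[|S])[(id : ℝ → ℝ)] = p⁻¹ * I1 := by rw [← hνint fun x => x]; rfl
    rw [e2, e1]
    field_simp
  rw [hval]
  clear_value p q I1 I2 J1 T
  clear hνint hνae hmemν hνprob hST hM2 hM1 hmem hint1 hint2 hpos hSm htail hvar hval hSdef hpdef hqdef hI1def hI2def hJ1def hTdef
  -- final arithmetic
  set X : ℝ := I1 ^ 2 / p with hXdef
  have hXp : X * p = I1 ^ 2 := div_mul_cancel₀ _ hp.ne'
  have hXB : X ≤ B ^ 2 * p := by
    rw [hXdef, div_le_iff₀ hp]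
    nlinarith [sq_abs I1, abs_nonneg I1]
  have hX0 : 0 ≤ X := div_nonneg (sq_nonneg _) hp.le
  have h1 : X * q ≤ T := by
    have ha : X * q ≤ B ^ 2 * p * q := mul_le_mul_of_nonneg_right hXB hq0
    have hb : B ^ 2 * p * q ≤ B ^ 2 * q := by
      nlinarith [mul_nonneg (mul_nonneg (sq_nonneg B) hq0) (show (0:ℝ) ≤ 1 - p by linarith)]
    linarith
  have hXsplit : X * q = X - I1 ^ 2 := by linear_combination X * hpq - hXp
  have h2 : -(2 * T) ≤ 2 * (I1 * J1) := by
    have habs : |I1 * J1| ≤ (B * p) * (T / B) := by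
      rw [abs_mul]
      exact mul_le_mul hI1b hJ (abs_nonneg _) (by positivity)
    have heq : (B * p) * (T / B) = p * T := by field_simp
    have h3 : p * T ≤ T := by nlinarith
    have h4 := neg_abs_le (I1 * J1)
    rw [heq] at habs
    nlinarith
  have hexp : (I1 + J1) ^ 2 = I1 ^ 2 + 2 * (I1 * J1) + J1 ^ 2 := by ring
  linarith [sq_nonneg J1]
end

section
/- Let D be a distribution on ℝ^d × ℝ, V a subspace of ℝ^d, T : V × ℝ → {0,1} a measurable label-transformation function, and p : ℝ^d → ℝ a mean-zero, variance-one polynomial (under the x-marginal of D) with E_{(x,y)∼D}[p(x)·T(x_V, y)] ≥ σ. Let P' be a finite collection of disjoint measurable subsets of V × ℝ and define T̂(x_V, y) = Σ_{R∈P'} 1((x_V,y) ∈ R). If Pr_{(x,y)∼D}[T(x_V,y) ≠ T̂(x_V,y)] ≤ σ²/4, then there exists R ∈ P' such that E_{(x,y)∼D}[p(x)·1((x_V,y) ∈ R)] ≥ σ/(2|P'|). -/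
open MeasureTheory

/-- **Label transformation approximation.** If a mean-zero, unit-variance
polynomial `p` correlates at least `σ` with a 0/1 label transformation `T(x_V, y)`, and `T`
agrees with the indicator of a finite disjoint family `R` except on mass at most `σ²/4`, then
`p` correlates at least `σ/(2n)` with the indicator of one of the sets of the family. -/
theorem stmt_13 (d : ℕ) (D : Measure (EuclideanSpace ℝ (Fin d) × ℝ)) [IsProbabilityMeasure D]
    (V : Submodule ℝ (EuclideanSpace ℝ (Fin d)))
    (T : EuclideanSpace ℝ (Fin d) → ℝ → ℝ)
    (hT01 : ∀ v y, T v y = 0 ∨ T v y = 1)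
    (hTmeas : Measurable fun p : EuclideanSpace ℝ (Fin d) × ℝ => T p.1 p.2)
    (p : EuclideanSpace ℝ (Fin d) → ℝ)
    (hpoly : ∃ q : MvPolynomial (Fin d) ℝ, ∀ x, p x = MvPolynomial.eval (fun i => x i) q)
    (hmean : ∫ z, p z.1 ∂D = 0) (hvarone : ∫ z, p z.1 ^ 2 ∂D = 1)
    (σ : ℝ) (hσ : 0 < σ)
    (hcorr : σ ≤ ∫ z, p z.1 *
      T (V.orthogonalProjectionOnto z.1 : EuclideanSpace ℝ (Fin d)) z.2 ∂D)
    (n : ℕ) (hn : 0 < n) (R : Fin n → Set (EuclideanSpace ℝ (Fin d) × ℝ))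
    (hRmeas : ∀ j, MeasurableSet (R j)) (hdisj : Pairwise (Function.onFun Disjoint R))
    (hagree : (D {z | T (V.orthogonalProjectionOnto z.1 : EuclideanSpace ℝ (Fin d)) z.2 ≠
        ∑ j, Set.indicator (R j) (fun _ => (1 : ℝ))
          ((V.orthogonalProjectionOnto z.1 : EuclideanSpace ℝ (Fin d)), z.2)}).toReal ≤
      σ ^ 2 / 4) :
    ∃ j : Fin n, σ / (2 * n) ≤ ∫ z, p z.1 *
        Set.indicator (R j) (fun _ => (1 : ℝ))
          ((V.orthogonalProjectionOnto z.1 : EuclideanSpace ℝ (Fin d)), z.2) ∂D := by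
  obtain ⟨q, hq⟩ := hpoly
  -- abbreviations
  set prj : EuclideanSpace ℝ (Fin d) × ℝ → EuclideanSpace ℝ (Fin d) × ℝ :=
    fun z => ((V.orthogonalProjectionOnto z.1 : EuclideanSpace ℝ (Fin d)), z.2) with hprj
  set Tb : EuclideanSpace ℝ (Fin d) × ℝ → ℝ := fun w => T w.1 w.2 with hTb
  set Th : EuclideanSpace ℝ (Fin d) × ℝ → ℝ :=
    fun w => ∑ j, Set.indicator (R j) (fun _ => (1 : ℝ)) w with hTh
  -- measurability
  have hprjm : Measurable prj := by
    have : Continuous fun x : EuclideanSpace ℝ (Fin d) =>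
        (V.orthogonalProjectionOnto x : EuclideanSpace ℝ (Fin d)) :=
      (V.subtypeL.comp (V.orthogonalProjectionOnto)).continuous
    exact ((this.comp continuous_fst).prodMk continuous_snd).measurable
  have hpcont : Continuous p := by
    have h1 : Continuous fun x : Fin d → ℝ => MvPolynomial.eval x q :=
      MvPolynomial.continuous_eval q
    have h2 : Continuous fun x : EuclideanSpace ℝ (Fin d) => (fun i => x i : Fin d → ℝ) :=
      continuous_pi fun i => (EuclideanSpace.proj i).continuous
    have : p = (fun x : Fin d → ℝ => MvPolynomial.eval x q) ∘
        (fun x : EuclideanSpace ℝ (Fin d) => (fun i => x i)) := funext hq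
    rw [this]; exact h1.comp h2
  have hmeasP : Measurable fun z : EuclideanSpace ℝ (Fin d) × ℝ => p z.1 :=
    hpcont.measurable.comp measurable_fst
  have hThm : Measurable Th :=
    Finset.measurable_sum _ fun j _ => measurable_const.indicator (hRmeas j)
  have hTbm : Measurable Tb := hTmeas
  -- 0/1 values of Th
  have hTh01 : ∀ w, Th w = 0 ∨ Th w = 1 := by
    intro w
    by_cases h : ∃ j, w ∈ R j
    · right
      obtain ⟨j0, hj0⟩ := h
      simp only [hTh]
      rw [Finset.sum_eq_single j0]
      · simp [hj0]
      · intro j _ hne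
        have hw : w ∉ R j := fun hw => (Set.disjoint_left.mp (hdisj hne)) hw hj0
        simp [Set.indicator_of_notMem hw]
      · simp
    · left
      push_neg at h
      exact Finset.sum_eq_zero fun j _ => Set.indicator_of_notMem (h j) _
  -- integrability
  have hsq_int : Integrable (fun z => p z.1 ^ 2) D := by
    by_contra h
    rw [integral_undef h] at hvarone
    norm_num at hvarone
  have hPint : Integrable (fun z => p z.1) D := by
    have h2 : MemLp (fun z => p z.1) 2 D :=
      (memLp_two_iff_integrable_sq hmeasP.aestronglyMeasurable).2 hsq_int
    exact h2.integrable (by norm_num)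
  have key : ∀ h : EuclideanSpace ℝ (Fin d) × ℝ → ℝ, Measurable h → (∀ w, |h w| ≤ 1) →
      Integrable (fun z => p z.1 * h (prj z)) D := by
    intro h hm hb
    refine hPint.norm.mono' ((hmeasP.mul (hm.comp hprjm)).aestronglyMeasurable) ?_
    filter_upwards with z
    rw [norm_mul]
    calc ‖p z.1‖ * ‖h (prj z)‖ ≤ ‖p z.1‖ * 1 := by
          exact mul_le_mul_of_nonneg_left (by simpa [Real.norm_eq_abs] using hb (prj z))
            (norm_nonneg _)
      _ = ‖p z.1‖ := mul_one _
  have hTbb : ∀ w, |Tb w| ≤ 1 := by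
    intro w; rcases hT01 w.1 w.2 with h | h <;> simp [hTb, h]
  have hThb : ∀ w, |Th w| ≤ 1 := by
    intro w; rcases hTh01 w with h | h <;> simp [h]
  have hgb : ∀ w, |Tb w - Th w| ≤ 1 := by
    intro w
    rcases hT01 w.1 w.2 with h1 | h1 <;> rcases hTh01 w with h2 | h2 <;>
      simp [hTb] at h1 ⊢ <;> rw [h1, h2] <;> norm_num
  have hint_pTb : Integrable (fun z => p z.1 * Tb (prj z)) D := key Tb hTbm hTbb
  have hint_pTh : Integrable (fun z => p z.1 * Th (prj z)) D := key Th hThm hThb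
  have hint_pg : Integrable (fun z => p z.1 * (Tb (prj z) - Th (prj z))) D :=
    key (fun w => Tb w - Th w) (hTbm.sub hThm) hgb
  -- the disagreement set
  set A : Set (EuclideanSpace ℝ (Fin d) × ℝ) := {z | Tb (prj z) ≠ Th (prj z)} with hA
  have hAmeas : MeasurableSet A := by
    have : MeasurableSet {z : EuclideanSpace ℝ (Fin d) × ℝ | Tb (prj z) = Th (prj z)} :=
      measurableSet_eq_fun (hTbm.comp hprjm) (hThm.comp hprjm)
    simpa [hA, Set.compl_setOf] using this.compl
  have hAbound : (D A).toReal ≤ σ ^ 2 / 4 := hagree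
  have hg2m : Measurable fun z => (Tb (prj z) - Th (prj z)) ^ 2 :=
    ((hTbm.comp hprjm).sub (hThm.comp hprjm)).pow_const 2
  have hindint : Integrable (A.indicator fun _ => (1 : ℝ)) D :=
    (integrable_const (1 : ℝ)).indicator hAmeas
  have hg2le : ∀ z, (Tb (prj z) - Th (prj z)) ^ 2 ≤ A.indicator (fun _ => (1 : ℝ)) z := by
    intro z
    by_cases hz : z ∈ A
    · rw [Set.indicator_of_mem hz]
      have := hgb (prj z)
      rw [abs_le] at this
      nlinarith [this.1, this.2]
    · rw [Set.indicator_of_notMem hz]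
      have hz0 : Tb (prj z) = Th (prj z) := not_not.mp hz
      rw [hz0]; simp
  have hg2int : Integrable (fun z => (Tb (prj z) - Th (prj z)) ^ 2) D := by
    refine hindint.mono' hg2m.aestronglyMeasurable ?_
    filter_upwards with z
    rw [Real.norm_eq_abs, abs_of_nonneg (sq_nonneg _)]
    exact hg2le z
  have hg2 : ∫ z, (Tb (prj z) - Th (prj z)) ^ 2 ∂D ≤ σ ^ 2 / 4 := by
    calc ∫ z, (Tb (prj z) - Th (prj z)) ^ 2 ∂D
        ≤ ∫ z, A.indicator (fun _ => (1 : ℝ)) z ∂D := integral_mono hg2int hindint hg2le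
      _ = (D A).toReal := by
          exact integral_indicator_one hAmeas (μ := D)
      _ ≤ σ ^ 2 / 4 := hAbound
  -- Cauchy–Schwarz via AM–GM
  have hCS : ∫ z, p z.1 * (Tb (prj z) - Th (prj z)) ∂D ≤ σ / 2 := by
    have hmono : ∫ z, (σ / 2) * (p z.1 * (Tb (prj z) - Th (prj z))) ∂D ≤
        ∫ z, ((σ / 2) ^ 2 * p z.1 ^ 2 + (Tb (prj z) - Th (prj z)) ^ 2) / 2 ∂D := by
      refine integral_mono (hint_pg.const_mul _)
        (((hsq_int.const_mul _).add hg2int).div_const 2) ?_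
      intro z
      nlinarith [sq_nonneg ((σ / 2) * p z.1 - (Tb (prj z) - Th (prj z)))]
    rw [integral_const_mul] at hmono
    have hrhs : ∫ z, ((σ / 2) ^ 2 * p z.1 ^ 2 + (Tb (prj z) - Th (prj z)) ^ 2) / 2 ∂D =
        ((σ / 2) ^ 2 * 1 + ∫ z, (Tb (prj z) - Th (prj z)) ^ 2 ∂D) / 2 := by
      rw [integral_div, integral_add (hsq_int.const_mul _) hg2int, integral_const_mul, hvarone]
    rw [hrhs] at hmono
    nlinarith [hg2, hσ]
  -- correlation with Th
  have hTh_corr : σ / 2 ≤ ∫ z, p z.1 * Th (prj z) ∂D := by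
    have hsplit : ∫ z, p z.1 * Tb (prj z) ∂D =
        ∫ z, p z.1 * Th (prj z) ∂D + ∫ z, p z.1 * (Tb (prj z) - Th (prj z)) ∂D := by
      rw [← integral_add hint_pTh hint_pg]
      congr 1
      funext z
      ring
    have hcorr' : σ ≤ ∫ z, p z.1 * Tb (prj z) ∂D := hcorr
    linarith [hcorr', hCS, hsplit.le, hsplit.ge]
  -- split into sum
  have hsum : ∫ z, p z.1 * Th (prj z) ∂D =
      ∑ j, ∫ z, p z.1 * Set.indicator (R j) (fun _ => (1 : ℝ)) (prj z) ∂D := by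
    rw [← integral_finset_sum _ (fun j _ => key (Set.indicator (R j) (fun _ => (1 : ℝ)))
      (measurable_const.indicator (hRmeas j))
      (fun w => by by_cases hw : w ∈ R j <;> simp [hw]))]
    congr 1
    funext z
    rw [hTh, Finset.mul_sum]
  -- pigeonhole
  by_contra hcon
  push_neg at hcon
  have hlt : ∑ j, ∫ z, p z.1 * Set.indicator (R j) (fun _ => (1 : ℝ)) (prj z) ∂D <
      ∑ _j : Fin n, σ / (2 * n) := by
    refine Finset.sum_lt_sum_of_nonempty ?_ fun j _ => hcon j
    exact Finset.univ_nonempty_iff.mpr ⟨⟨0, hn⟩⟩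
  have hval : ∑ _j : Fin n, σ / (2 * n) = σ / 2 := by
    rw [Finset.sum_const, Finset.card_univ, Fintype.card_fin, nsmul_eq_mul]
    field_simp
  rw [hval, ← hsum] at hlt
  linarith [hTh_corr, hlt]
end
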